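/- arXiv:2108.06731 — 10 statements merged into one kernel-verified Lean document; each statement's English description precedes it below -/
import Mathlib

section
/- Let m, n be positive natural numbers, A an m×n integer matrix and b ∈ ℤ^m. Then the following are equivalent: (i) for every vector x ∈ ℤ^n with all entries nonnegative and every positive integer r, one has A·x ≠ r·b; (ii) there exists y ∈ ℤ^m such that every entry of the row vector yᵀA is nonnegative and yᵀ·b < 0. -/
open scoped Matrix
open Finset

private lemma farkas_rat (m : ℕ) : ∀ (n : ℕ) (a : Fin n → (Fin m → ℚ)) (b : Fin m → ℚ),
    (∃ x : Fin n → ℚ, (∀ i, 0 ≤ x i) ∧ ∑ i, x i • a i = b) ∨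
    (∃ y : Fin m → ℚ, (∀ i, 0 ≤ y ⬝ᵥ a i) ∧ y ⬝ᵥ b < 0) := by
  intro n
  induction n with
  | zero =>
    intro a b
    by_cases hb : b = 0
    · exact Or.inl ⟨fun i => 0, fun i => le_refl _, by simp [hb]⟩
    · refine Or.inr ⟨-b, fun i => i.elim0, ?_⟩
      have h2 : b ⬝ᵥ b ≠ 0 := fun h => hb (dotProduct_self_eq_zero.mp h)
      have h1 : 0 ≤ b ⬝ᵥ b := Finset.sum_nonneg fun i _ => mul_self_nonneg _
      have : 0 < b ⬝ᵥ b := lt_of_le_of_ne h1 (Ne.symm h2)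
      simpa [neg_dotProduct] using this
  | succ n ih =>
    intro a b
    set a' : Fin n → (Fin m → ℚ) := fun i => a i.castSucc with ha'
    set c : Fin m → ℚ := a (Fin.last n) with hc
    rcases ih a' b with ⟨x, hx, hsum⟩ | ⟨y, hy, hyb⟩
    · refine Or.inl ⟨Fin.snoc x 0, ?_, ?_⟩
      · intro i
        refine Fin.lastCases ?_ ?_ i
        · simp
        · intro j; simpa using hx j
      · rw [Fin.sum_univ_castSucc]
        simpa using hsum
    · by_cases hyc : 0 ≤ y ⬝ᵥ c
      · refine Or.inr ⟨y, ?_, hyb⟩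
        intro i
        refine Fin.lastCases hyc (fun j => hy j) i
      · push_neg at hyc
        set t : ℚ := y ⬝ᵥ c with ht
        have htne : t ≠ 0 := ne_of_lt hyc
        set a'' : Fin n → (Fin m → ℚ) := fun i => a' i - ((y ⬝ᵥ a' i) / t) • c with ha''
        set b' : Fin m → ℚ := b - ((y ⬝ᵥ b) / t) • c with hb'
        rcases ih a'' b' with ⟨x, hx, hsum⟩ | ⟨z, hz, hzb'⟩
        · set S : ℚ := ∑ i, x i * (y ⬝ᵥ a' i) with hS
          set μ : ℚ := (y ⬝ᵥ b - S) / t with hμ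
          have hSnn : 0 ≤ S := Finset.sum_nonneg fun i _ => mul_nonneg (hx i) (hy i)
          have hμpos : 0 < μ := div_pos_of_neg_of_neg (by linarith) hyc
          refine Or.inl ⟨Fin.snoc x μ, ?_, ?_⟩
          · intro i
            refine Fin.lastCases ?_ ?_ i
            · simpa using hμpos.le
            · intro j; simpa using hx j
          · rw [Fin.sum_univ_castSucc]
            simp only [Fin.snoc_castSucc, Fin.snoc_last]
            have key : ∑ i, x i • a' i = (∑ i, x i • a'' i) + (S / t) • c := by
              rw [hS, Finset.sum_div, Finset.sum_smul, ← Finset.sum_add_distrib]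
              refine Finset.sum_congr rfl fun i _ => ?_
              rw [ha'']
              match_scalars <;> field_simp <;> ring
            rw [key, hsum, hb', hμ]
            match_scalars <;> field_simp <;> ring
        · set s : ℚ := (z ⬝ᵥ c) / t with hs
          refine Or.inr ⟨z - s • y, ?_, ?_⟩
          · intro i
            refine Fin.lastCases ?_ ?_ i
            · rw [sub_dotProduct, smul_dotProduct, ← hc, ← ht, hs,
                smul_eq_mul, div_mul_cancel₀ _ htne, sub_self]
            · intro j
              have h0 := hz j
              rw [ha''] at h0
              simp only [dotProduct_sub, dotProduct_smul, smul_eq_mul] at h0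
              rw [sub_dotProduct, smul_dotProduct]
              simp only [smul_eq_mul]
              have heq : s * (y ⬝ᵥ a' j) = y ⬝ᵥ a' j / t * (z ⬝ᵥ c) := by rw [hs]; ring
              show 0 ≤ z ⬝ᵥ a' j - s * (y ⬝ᵥ a' j)
              linarith
          · have h0 := hzb'
            rw [hb'] at h0
            simp only [dotProduct_sub, dotProduct_smul, smul_eq_mul] at h0
            rw [sub_dotProduct, smul_dotProduct]
            simp only [smul_eq_mul]
            have heq : s * (y ⬝ᵥ b) = y ⬝ᵥ b / t * (z ⬝ᵥ c) := by rw [hs]; ring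
            linarith

private lemma exists_int_of_den_dvd (q : ℚ) (d : ℤ) (h : (q.den : ℤ) ∣ d) :
    ∃ z : ℤ, (z : ℚ) = d * q := by
  obtain ⟨c, rfl⟩ := h
  refine ⟨c * q.num, ?_⟩
  push_cast
  rw [mul_comm ((q.den : ℚ)) (c : ℚ), mul_assoc, mul_comm ((q.den : ℚ)) q,
    Rat.mul_den_eq_num]

/-- **Integer Farkas' lemma.** For an `m × n` integer matrix `A` and `b ∈ ℤ^m`, the
following are equivalent: (i) for every entrywise-nonnegative `x ∈ ℤ^n` and every positive
integer `r` one has `A·x ≠ r·b`; (ii) there exists `y ∈ ℤ^m` with `yᵀA` entrywise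
nonnegative and `yᵀ·b < 0`. -/
theorem integer_farkas (m n : ℕ) (hm : 0 < m) (hn : 0 < n)
    (A : Matrix (Fin m) (Fin n) ℤ) (b : Fin m → ℤ) :
    (∀ x : Fin n → ℤ, (∀ j, 0 ≤ x j) → ∀ r : ℤ, 0 < r → A.mulVec x ≠ r • b) ↔
    (∃ y : Fin m → ℤ, (∀ j, 0 ≤ Matrix.vecMul y A j) ∧ y ⬝ᵥ b < 0) := by
  constructor
  · intro hi
    set aQ : Fin n → (Fin m → ℚ) := fun j k => (A k j : ℚ) with haQ
    set bQ : Fin m → ℚ := fun k => (b k : ℚ) with hbQ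
    rcases farkas_rat m n aQ bQ with ⟨xq, hxq, hsum⟩ | ⟨yq, hyq, hyb⟩
    · exfalso
      set d : ℤ := ∏ j, ((xq j).den : ℤ) with hd
      have hdpos : 0 < d := Finset.prod_pos fun j _ => by exact_mod_cast (xq j).pos
      have hdvd : ∀ j, ((xq j).den : ℤ) ∣ d := fun j =>
        Finset.dvd_prod_of_mem _ (Finset.mem_univ j)
      choose x hxe using fun j => exists_int_of_den_dvd (xq j) d (hdvd j)
      apply hi x ?_ d hdpos
      · funext k
        apply (Int.cast_injective (α := ℚ))
        have hk := congrFun hsum k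
        simp only [Finset.sum_apply, Pi.smul_apply, smul_eq_mul] at hk
        push_cast [Matrix.mulVec, dotProduct, Pi.smul_apply, smul_eq_mul]
        calc ∑ j, (A k j : ℚ) * (x j : ℚ) = ∑ j, (A k j : ℚ) * (d * xq j) := by
              refine Finset.sum_congr rfl fun j _ => by rw [hxe j]
          _ = d * ∑ j, xq j * aQ j k := by rw [Finset.mul_sum]; refine Finset.sum_congr rfl fun j _ => by rw [haQ]; ring
          _ = d * bQ k := by rw [hk]
      · intro j
        have : (0 : ℚ) ≤ (x j : ℚ) := by
          rw [hxe j]; exact mul_nonneg (by exact_mod_cast hdpos.le) (hxq j)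
        exact_mod_cast this
    · set D : ℤ := ∏ k, ((yq k).den : ℤ) with hD
      have hDpos : 0 < D := Finset.prod_pos fun k _ => by exact_mod_cast (yq k).pos
      have hdvd : ∀ k, ((yq k).den : ℤ) ∣ D := fun k =>
        Finset.dvd_prod_of_mem _ (Finset.mem_univ k)
      choose y hye using fun k => exists_int_of_den_dvd (yq k) D (hdvd k)
      refine ⟨y, ?_, ?_⟩
      · intro j
        have : (0 : ℚ) ≤ ((Matrix.vecMul y A j : ℤ) : ℚ) := by
          push_cast [Matrix.vecMul, dotProduct]
          calc (0:ℚ) ≤ D * (yq ⬝ᵥ aQ j) := mul_nonneg (by exact_mod_cast hDpos.le) (hyq j)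
            _ = ∑ k, (y k : ℚ) * (A k j : ℚ) := by
                rw [dotProduct, Finset.mul_sum]
                refine Finset.sum_congr rfl fun k _ => by rw [hye k, haQ]; ring
        exact_mod_cast this
      · have : ((y ⬝ᵥ b : ℤ) : ℚ) < 0 := by
          push_cast [dotProduct]
          calc ∑ k, (y k : ℚ) * (b k : ℚ) = D * (yq ⬝ᵥ bQ) := by
                rw [dotProduct, Finset.mul_sum]
                refine Finset.sum_congr rfl fun k _ => by rw [hye k, hbQ]; ring
            _ < 0 := mul_neg_of_pos_of_neg (by exact_mod_cast hDpos) hyb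
        exact_mod_cast this
  · rintro ⟨y, hyA, hyb⟩ x hx r hr hEq
    have h1 : 0 ≤ y ⬝ᵥ A.mulVec x := by
      rw [Matrix.dotProduct_mulVec]
      exact Finset.sum_nonneg fun j _ => mul_nonneg (hyA j) (hx j)
    rw [hEq, dotProduct_smul] at h1
    have : r * (y ⬝ᵥ b) < 0 := mul_neg_of_pos_of_neg hr hyb
    simp only [smul_eq_mul] at h1
    linarith
end

section
/- Let a, b be nonnegative integers and let λ, μ, λ∨, μ∨, ν be nonzero real numbers satisfying λ·λ∨·ν = 2, μ·μ∨·ν = 2, λ·μ∨·ν = −b and μ·λ∨·ν = −a. Then a·b = 4, 2λ = −b·μ and 2μ = −a·λ; in particular (a,b) ∈ {(2,2),(1,4),(4,1)} and λ ∈ {−μ, −2μ, −μ/2}, so λ and μ are negative rational multiples of each other. -/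
/-- No rank 2 root system in dimension 1: if the Cartan integers `-a`, `-b` and nonzero
reals `λ, μ, λ∨, μ∨, ν` satisfy the pairing relations, then `ab = 4`, `2λ = -bμ`,
`2μ = -aλ`; hence `(a,b) ∈ {(2,2),(1,4),(4,1)}` and `λ ∈ {-μ, -2μ, -μ/2}`. -/
theorem no_rank_two_root_system_in_dim_one (a b : ℕ)
    (l m lv mv ν : ℝ) (hl : l ≠ 0) (hm : m ≠ 0) (hlv : lv ≠ 0) (hmv : mv ≠ 0) (hν : ν ≠ 0)
    (h1 : l * lv * ν = 2) (h2 : m * mv * ν = 2)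
    (h3 : l * mv * ν = -(b : ℝ)) (h4 : m * lv * ν = -(a : ℝ)) :
    a * b = 4 ∧ 2 * l = -(b : ℝ) * m ∧ 2 * m = -(a : ℝ) * l ∧
      ((a, b) = (2, 2) ∨ (a, b) = (1, 4) ∨ (a, b) = (4, 1)) ∧
      (l = -m ∨ l = -2 * m ∨ l = -m / 2) := by
  have hab : (a : ℝ) * b = 4 := by nlinarith [h1, h2, h3, h4]
  have habn : a * b = 4 := by exact_mod_cast (by push_cast; linarith : ((a * b : ℕ) : ℝ) = 4)
  have e1 : 2 * l = -(b : ℝ) * m := by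
    have key : m * mv * ν * l = l * mv * ν * m := by ring
    rw [h2, h3] at key; linarith
  have e2 : 2 * m = -(a : ℝ) * l := by
    have key : l * lv * ν * m = m * lv * ν * l := by ring
    rw [h1, h4] at key; linarith
  have ha4 : a ≤ 4 := Nat.le_of_dvd (by norm_num) ⟨b, habn.symm⟩
  have hcases : (a, b) = (2, 2) ∨ (a, b) = (1, 4) ∨ (a, b) = (4, 1) := by
    interval_cases a <;> simp_all [Prod.ext_iff] <;> omega
  refine ⟨habn, e1, e2, hcases, ?_⟩
  rcases hcases with h | h | h <;>
    · obtain ⟨rfl, rfl⟩ := Prod.mk.injEq .. ▸ Prod.ext_iff.mp h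
      push_cast at e1
      first
        | exact Or.inl (by linarith)
        | exact Or.inr (Or.inl (by linarith))
        | exact Or.inr (Or.inr (by linarith))
end

section
/- Let B be the 4×4 integer matrix with rows (2,0,0,−2), (0,2,0,−2), (0,0,2,−2), (−2,−2,−2,4). Then there is no vector v ∈ ℤ⁴ with vᵀBv = 2 and (Bv)₄ = 0. Equivalently, there are no integers x, y, z with x² + y² + z² − 2(xy + yz + zx) = 2 (indeed this equation has no solutions modulo 4). -/
open scoped Matrix

lemma no_sol (x y z : ℤ) :
    x ^ 2 + y ^ 2 + z ^ 2 - 2 * (x * y + y * z + z * x) ≠ 2 := by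
  intro h
  have h4 : ((x : ZMod 4)) ^ 2 + (y : ZMod 4) ^ 2 + (z : ZMod 4) ^ 2 -
      2 * ((x : ZMod 4) * y + (y : ZMod 4) * z + (z : ZMod 4) * x) = 2 := by
    have := congrArg (Int.cast : ℤ → ZMod 4) h
    push_cast at this
    exact this
  revert h4
  generalize (x : ZMod 4) = a
  generalize (y : ZMod 4) = b
  generalize (z : ZMod 4) = c
  revert a b c
  decide

/-- For the symmetrized Cartan matrix `B` of the rank 4 hyperbolic diagram with a central
vertex `4` doubly joined to vertices `1,2,3`, no integer vector `v` satisfies `vᵀBv = 2`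
and `(Bv)₄ = 0`; equivalently, `x² + y² + z² − 2(xy + yz + zx) = 2` has no integer
solutions. -/
theorem empty_centralizer_triple_double_edge
    (B : Matrix (Fin 4) (Fin 4) ℤ)
    (hB : B = !![2, 0, 0, -2; 0, 2, 0, -2; 0, 0, 2, -2; -2, -2, -2, 4]) :
    (¬ ∃ v : Fin 4 → ℤ, v ⬝ᵥ B.mulVec v = 2 ∧ B.mulVec v 3 = 0) ∧
    (¬ ∃ x y z : ℤ, x ^ 2 + y ^ 2 + z ^ 2 - 2 * (x * y + y * z + z * x) = 2) := by
  subst hB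
  constructor
  · rintro ⟨v, hq, ho⟩
    set x := v 0; set y := v 1; set z := v 2; set w := v 3
    have ho' : -2 * x + -2 * y + -2 * z + 4 * w = 0 := by
      simpa [Matrix.mulVec, dotProduct, Fin.sum_univ_four, mul_comm] using ho
    have hq' : x ^ 2 + y ^ 2 + z ^ 2 - 2 * (x * y + y * z + z * x) = 2 := by
      have hxyz : x + y + z = 2 * w := by linarith
      have hq2 : x * (2 * x + -(2 * w)) + y * (2 * y + -(2 * w)) + z * (2 * z + -(2 * w)) +
          w * (-(2 * x) + -(2 * y) + -(2 * z) + 4 * w) = 2 := by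
        simpa [dotProduct, Matrix.mulVec, Fin.sum_univ_four] using hq
      nlinarith [hxyz, hq2]
    exact no_sol x y z hq'
  · rintro ⟨x, y, z, h⟩
    exact no_sol x y z h
end

section
/- Let B be the 3×3 integer matrix with rows (2,−1,−2), (−1,1,−1), (−2,−1,2). For all integers x, y, z with −x + y − z = 0 and 2x² + y² + 2z² − 2xy − 4xz − 2yz = 1 (equivalently, 8x² − 8xy + y² = 1), the integer y is odd. Consequently, for v = (x,y,z) the vector v + e₂ has |v+e₂|² = 2 and its coordinates satisfy the divisibility conditions 2x ≡ 0, y+1 ≡ 0, 2z ≡ 0 (mod 2) of Kac's criterion, so v + e₂ is again a real root. -/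
open scoped Matrix

/-- In the rank 3 hyperbolic system with symmetrized Cartan matrix
`B = !![2,-1,-2; -1,1,-1; -2,-1,2]`: any integer solution of `-x + y - z = 0` and
`2x² + y² + 2z² − 2xy − 4xz − 2yz = 1` has `y` odd; consequently `v + e₂` has squared
length `2` and satisfies Kac's divisibility conditions, so it is again a real root. -/
theorem rank3_case3_no_strictly_orthogonal_root
    (B : Matrix (Fin 3) (Fin 3) ℤ)
    (hB : B = !![2, -1, -2; -1, 1, -1; -2, -1, 2])
    (x y z : ℤ) (h1 : -x + y - z = 0)
    (h2 : 2 * x ^ 2 + y ^ 2 + 2 * z ^ 2 - 2 * x * y - 4 * x * z - 2 * y * z = 1) :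
    Odd y ∧
    (![x, y, z] + ![0, 1, 0]) ⬝ᵥ B.mulVec (![x, y, z] + ![0, 1, 0]) = 2 ∧
    (2 : ℤ) ∣ 2 * x ∧ (2 : ℤ) ∣ (y + 1) ∧ (2 : ℤ) ∣ 2 * z := by
  have hysq : Odd (y ^ 2) :=
    ⟨-(x ^ 2 + z ^ 2 - x * y - 2 * x * z - y * z), by linarith⟩
  have hy : Odd y := by
    by_contra h
    rw [Int.not_odd_iff_even] at h
    exact (Int.not_odd_iff_even.mpr (Int.even_pow.mpr ⟨h, two_ne_zero⟩)) hysq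
  refine ⟨hy, ?_, ⟨x, by ring⟩, hy.add_one.two_dvd, ⟨z, by ring⟩⟩
  subst hB
  simp [Matrix.mulVec, dotProduct, Fin.sum_univ_three]
  ring_nf
  linarith
end

section
/- For natural numbers m define β_m = (6m(m+1), m(3m+2), (m+1)(3m+1), 3m(m+1)) ∈ ℤ⁴ and β'_m = (6m(m+1), (m+1)(3m+1), m(3m+2), 3m(m+1)) ∈ ℤ⁴. Then for every n ≥ 1 and every positive integer r, there do not exist nonnegative integers a₀,…,a_{n−1}, b₀,…,b_{n−1} such that r·β_n = Σ_{m=0}^{n−1} (a_m·β_m + b_m·β'_m), and likewise r·β'_n is not such a combination. Hence the family β₀, β'₀, β₁, β'₁, … , β_n, β'_n is weakly independent for every n. -/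
/-- `β_m = (6m(m+1), m(3m+2), (m+1)(3m+1), 3m(m+1))`. -/
def betaFam (m : ℕ) : Fin 4 → ℤ :=
  ![6 * (m : ℤ) * (m + 1), m * (3 * m + 2), (m + 1) * (3 * m + 1), 3 * m * (m + 1)]

/-- `β'_m = (6m(m+1), (m+1)(3m+1), m(3m+2), 3m(m+1))`. -/
def betaFam' (m : ℕ) : Fin 4 → ℤ :=
  ![6 * (m : ℤ) * (m + 1), (m + 1) * (3 * m + 1), m * (3 * m + 2), 3 * m * (m + 1)]

/-- Farkas-type auxiliary lemma: if a linear functional `y` is nonnegative on all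
`β_m, β'_m` for `m < n` but negative (value `-1`) on `v`, then `r • v` is not a
nonnegative combination. -/
private lemma farkas_aux (n : ℕ) (r : ℤ) (hr : 0 < r) (y v : Fin 4 → ℤ)
    (hv : y 0 * v 0 + y 1 * v 1 + y 2 * v 2 + y 3 * v 3 = -1)
    (hβ : ∀ m < n, 0 ≤ y 0 * betaFam m 0 + y 1 * betaFam m 1
        + y 2 * betaFam m 2 + y 3 * betaFam m 3)
    (hβ' : ∀ m < n, 0 ≤ y 0 * betaFam' m 0 + y 1 * betaFam' m 1
        + y 2 * betaFam' m 2 + y 3 * betaFam' m 3) :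
    ¬ ∃ a b : ℕ → ℕ, r • v =
        ∑ m ∈ Finset.range n, ((a m : ℤ) • betaFam m + (b m : ℤ) • betaFam' m) := by
  rintro ⟨a, b, h⟩
  have hcoord : ∀ i : Fin 4, r * v i =
      ∑ m ∈ Finset.range n, ((a m : ℤ) * betaFam m i + (b m : ℤ) * betaFam' m i) := by
    intro i
    have := congrFun h i
    simpa [Finset.sum_apply, Pi.add_apply, Pi.smul_apply, smul_eq_mul] using this
  have key : y 0 * (r * v 0) + y 1 * (r * v 1) + y 2 * (r * v 2) + y 3 * (r * v 3)
      = ∑ m ∈ Finset.range n,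
          ((a m : ℤ) * (y 0 * betaFam m 0 + y 1 * betaFam m 1
              + y 2 * betaFam m 2 + y 3 * betaFam m 3)
            + (b m : ℤ) * (y 0 * betaFam' m 0 + y 1 * betaFam' m 1
              + y 2 * betaFam' m 2 + y 3 * betaFam' m 3)) := by
    rw [hcoord 0, hcoord 1, hcoord 2, hcoord 3]
    rw [Finset.mul_sum, Finset.mul_sum, Finset.mul_sum, Finset.mul_sum,
      ← Finset.sum_add_distrib, ← Finset.sum_add_distrib, ← Finset.sum_add_distrib]
    exact Finset.sum_congr rfl fun m _ => by ring
  have hlhs : y 0 * (r * v 0) + y 1 * (r * v 1) + y 2 * (r * v 2) + y 3 * (r * v 3)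
      = -r := by
    have : y 0 * (r * v 0) + y 1 * (r * v 1) + y 2 * (r * v 2) + y 3 * (r * v 3)
        = r * (y 0 * v 0 + y 1 * v 1 + y 2 * v 2 + y 3 * v 3) := by ring
    rw [this, hv]; ring
  have hrhs : 0 ≤ ∑ m ∈ Finset.range n,
      ((a m : ℤ) * (y 0 * betaFam m 0 + y 1 * betaFam m 1
          + y 2 * betaFam m 2 + y 3 * betaFam m 3)
        + (b m : ℤ) * (y 0 * betaFam' m 0 + y 1 * betaFam' m 1
          + y 2 * betaFam' m 2 + y 3 * betaFam' m 3)) := by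
    refine Finset.sum_nonneg fun m hm => ?_
    have hmn := Finset.mem_range.mp hm
    exact add_nonneg (mul_nonneg (by positivity) (hβ m hmn))
      (mul_nonneg (by positivity) (hβ' m hmn))
  rw [hlhs] at key
  linarith [key ▸ hrhs]

/-- For every `n ≥ 1` and every positive integer `r`, neither `r·β_n` nor `r·β'_n` is a
nonnegative integer combination of `β₀, β'₀, …, β_{n−1}, β'_{n−1}`; hence the family
`β₀, β'₀, β₁, β'₁, …` is weakly independent. -/
theorem weak_independence_of_betaFam (n : ℕ) (hn : 1 ≤ n) (r : ℤ) (hr : 0 < r) :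
    (¬ ∃ a b : ℕ → ℕ, r • betaFam n =
        ∑ m ∈ Finset.range n, ((a m : ℤ) • betaFam m + (b m : ℤ) • betaFam' m)) ∧
    (¬ ∃ a b : ℕ → ℕ, r • betaFam' n =
        ∑ m ∈ Finset.range n, ((a m : ℤ) • betaFam m + (b m : ℤ) • betaFam' m)) := by
  constructor
  · refine farkas_aux n r hr ![-(n : ℤ), n, (n : ℤ) - 1, 1] (betaFam n) ?_ ?_ ?_
    · simp [betaFam]; ring
    · intro m hm
      have hmn : (m : ℤ) + 1 ≤ n := by exact_mod_cast hm
      have : -(n : ℤ) * (6 * m * (m + 1)) + n * (m * (3 * m + 2))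
          + ((n : ℤ) - 1) * ((m + 1) * (3 * m + 1)) + 1 * (3 * m * (m + 1))
          = (n : ℤ) - m - 1 := by ring
      simp only [betaFam, Matrix.cons_val_zero, Matrix.cons_val_one, Matrix.head_cons,
        Matrix.cons_val_two, Matrix.tail_cons, Matrix.cons_val_three]
      rw [this]; linarith
    · intro m hm
      have : -(n : ℤ) * (6 * m * (m + 1)) + n * ((m + 1) * (3 * m + 1))
          + ((n : ℤ) - 1) * (m * (3 * m + 2)) + 1 * (3 * m * (m + 1))
          = (n : ℤ) + m := by ring
      simp only [betaFam', Matrix.cons_val_zero, Matrix.cons_val_one, Matrix.head_cons,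
        Matrix.cons_val_two, Matrix.tail_cons, Matrix.cons_val_three]
      rw [this]; positivity
  · refine farkas_aux n r hr ![-(n : ℤ), (n : ℤ) - 1, n, 1] (betaFam' n) ?_ ?_ ?_
    · simp [betaFam']; ring
    · intro m hm
      have : -(n : ℤ) * (6 * m * (m + 1)) + ((n : ℤ) - 1) * (m * (3 * m + 2))
          + n * ((m + 1) * (3 * m + 1)) + 1 * (3 * m * (m + 1))
          = (n : ℤ) + m := by ring
      simp only [betaFam, Matrix.cons_val_zero, Matrix.cons_val_one, Matrix.head_cons,
        Matrix.cons_val_two, Matrix.tail_cons, Matrix.cons_val_three]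
      rw [this]; positivity
    · intro m hm
      have hmn : (m : ℤ) + 1 ≤ n := by exact_mod_cast hm
      have : -(n : ℤ) * (6 * m * (m + 1)) + ((n : ℤ) - 1) * ((m + 1) * (3 * m + 1))
          + n * (m * (3 * m + 2)) + 1 * (3 * m * (m + 1))
          = (n : ℤ) - m - 1 := by ring
      simp only [betaFam', Matrix.cons_val_zero, Matrix.cons_val_one, Matrix.head_cons,
        Matrix.cons_val_two, Matrix.tail_cons, Matrix.cons_val_three]
      rw [this]; linarith
end

section
/- Let B be the 5×5 integer matrix with B_ii = 2, B_ij = −1 for {i,j} ∈ {{1,2},{2,3},{3,4},{1,4},{1,5}} and B_ij = 0 otherwise. For every integer n ≥ 1, the vector γ_n = (4n(n+1), n(2n+1), 2n(n+1), (n+1)(2n+1), 2n(n+1)) ∈ ℤ⁵ satisfies γ_nᵀBγ_n = 2 and (Bγ_n)₅ = 0, and the same holds for the vector obtained from γ_n by swapping the 2nd and 4th coordinates, as well as for the vector (2,1,0,1,1). -/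
open scoped Matrix

/-- In the rank 5 simply-laced hyperbolic system (a 4-cycle `1,2,3,4` with pendant vertex
`5` at `1`), for every `n ≥ 1` the vector
`γ_n = (4n(n+1), n(2n+1), 2n(n+1), (n+1)(2n+1), 2n(n+1))`, the vector obtained by
swapping its 2nd and 4th coordinates, and the vector `(2,1,0,1,1)` all have squared
length `2` and are orthogonal to `α₅`. -/
theorem infinite_family_square_pendant
    (B : Matrix (Fin 5) (Fin 5) ℤ)
    (hB : B = !![2, -1, 0, -1, -1; -1, 2, -1, 0, 0; 0, -1, 2, -1, 0;
        -1, 0, -1, 2, 0; -1, 0, 0, 0, 2])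
    (n : ℕ) (hn : 1 ≤ n)
    (γ γ' : Fin 5 → ℤ)
    (hγ : γ = ![4 * (n : ℤ) * (n + 1), n * (2 * n + 1), 2 * n * (n + 1),
        (n + 1) * (2 * n + 1), 2 * n * (n + 1)])
    (hγ' : γ' = ![4 * (n : ℤ) * (n + 1), (n + 1) * (2 * n + 1), 2 * n * (n + 1),
        n * (2 * n + 1), 2 * n * (n + 1)]) :
    γ ⬝ᵥ B.mulVec γ = 2 ∧ B.mulVec γ 4 = 0 ∧
    γ' ⬝ᵥ B.mulVec γ' = 2 ∧ B.mulVec γ' 4 = 0 ∧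
    (![2, 1, 0, 1, 1] : Fin 5 → ℤ) ⬝ᵥ B.mulVec ![2, 1, 0, 1, 1] = 2 ∧
    B.mulVec (![2, 1, 0, 1, 1] : Fin 5 → ℤ) 4 = 0 := by
  subst hB hγ hγ'
  refine ⟨?_, ?_, ?_, ?_, ?_, ?_⟩ <;>
    simp [Matrix.mulVec, dotProduct, Fin.sum_univ_five, Matrix.cons_val_zero,
      Matrix.cons_val_one, Matrix.head_cons, Matrix.vecHead, Matrix.vecTail] <;> ring
end

section
/- Let B be the 7×7 integer matrix with B_ii = 2, B_ij = −1 for {i,j} ∈ {{1,2},{2,3},{3,4},{4,5},{5,6},{1,6},{1,7}} and B_ij = 0 otherwise. For every integer n ≥ 1, the vector δ'_n = (6n(2n+1), 6n²+n, 6n²+2n, 3n(2n+1), 6n²+4n, 6n²+5n+1, 3n(2n+1)) ∈ ℤ⁷ satisfies δ'_nᵀBδ'_n = 2 and (Bδ'_n)₇ = 0. -/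
open scoped Matrix

private lemma v0 {α : Type*} (a b c d e f g : α) : ![a,b,c,d,e,f,g] 0 = a := rfl
private lemma v1 {α : Type*} (a b c d e f g : α) : ![a,b,c,d,e,f,g] 1 = b := rfl
private lemma v2 {α : Type*} (a b c d e f g : α) : ![a,b,c,d,e,f,g] 2 = c := rfl
private lemma v3 {α : Type*} (a b c d e f g : α) : ![a,b,c,d,e,f,g] 3 = d := rfl
private lemma v4 {α : Type*} (a b c d e f g : α) : ![a,b,c,d,e,f,g] 4 = e := rfl
private lemma v5 {α : Type*} (a b c d e f g : α) : ![a,b,c,d,e,f,g] 5 = f := rfl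
private lemma v6 {α : Type*} (a b c d e f g : α) : ![a,b,c,d,e,f,g] 6 = g := rfl

/-- In the rank 7 simply-laced hyperbolic system (a 6-cycle `1,…,6` with pendant vertex
`7` at `1`), for every `n ≥ 1` the vector
`δ'_n = (6n(2n+1), 6n²+n, 6n²+2n, 3n(2n+1), 6n²+4n, 6n²+5n+1, 3n(2n+1))`
has squared length `2` and is orthogonal to `α₇`. -/
theorem infinite_family_hexagon_pendant_second
    (B : Matrix (Fin 7) (Fin 7) ℤ)
    (hB : B = !![2, -1, 0, 0, 0, -1, -1;
                 -1, 2, -1, 0, 0, 0, 0;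
                 0, -1, 2, -1, 0, 0, 0;
                 0, 0, -1, 2, -1, 0, 0;
                 0, 0, 0, -1, 2, -1, 0;
                 -1, 0, 0, 0, -1, 2, 0;
                 -1, 0, 0, 0, 0, 0, 2])
    (n : ℕ) (hn : 1 ≤ n)
    (δ : Fin 7 → ℤ)
    (hδ : δ = ![6 * (n : ℤ) * (2 * n + 1), 6 * (n : ℤ) ^ 2 + n,
        6 * (n : ℤ) ^ 2 + 2 * n, 3 * (n : ℤ) * (2 * n + 1), 6 * (n : ℤ) ^ 2 + 4 * n,
        6 * (n : ℤ) ^ 2 + 5 * n + 1, 3 * (n : ℤ) * (2 * n + 1)]) :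
    δ ⬝ᵥ B.mulVec δ = 2 ∧ B.mulVec δ 6 = 0 := by
  subst hB hδ
  constructor <;>
  · simp only [Matrix.mulVec, dotProduct, Fin.sum_univ_seven, Matrix.of_apply,
      
      v0, v1, v2, v3, v4, v5, v6]
    ring
end

section
/- Let B be the 4×4 integer matrix with rows (2,−1,−1,−1), (−1,2,−1,0), (−1,−1,2,−1), (−1,0,−1,2). For every natural number n, the vector v_n = (2n(3n−1), 1, 2n(3n+1), 6n²) ∈ ℤ⁴ satisfies v_nᵀBv_n = 2 and (Bv_n)₄ = 0. -/
open scoped Matrix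

/-- In the rank 4 simply-laced hyperbolic system with edges `{1,2},{1,3},{1,4},{2,3},{3,4}`,
for every `n ∈ ℕ` the vector `v_n = (2n(3n−1), 1, 2n(3n+1), 6n²)` has squared length `2`
and is orthogonal to `α₄`. -/
theorem infinite_family_c2_one
    (B : Matrix (Fin 4) (Fin 4) ℤ)
    (hB : B = !![2, -1, -1, -1; -1, 2, -1, 0; -1, -1, 2, -1; -1, 0, -1, 2])
    (n : ℕ)
    (v : Fin 4 → ℤ)
    (hv : v = ![2 * (n : ℤ) * (3 * n - 1), 1, 2 * (n : ℤ) * (3 * n + 1), 6 * (n : ℤ) ^ 2]) :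
    v ⬝ᵥ B.mulVec v = 2 ∧ B.mulVec v 3 = 0 := by
  subst hB hv
  constructor
  · simp [dotProduct, Matrix.mulVec, Fin.sum_univ_four, Matrix.vecHead, Matrix.vecTail]
    ring
  · simp [Matrix.mulVec, dotProduct, Fin.sum_univ_four, Matrix.vecHead, Matrix.vecTail]
    ring
end

section
/- Let B be the 4×4 integer matrix with rows (2,−1,−1,−1), (−1,2,−1,0), (−1,−1,2,−1), (−1,0,−1,2). For every natural number n, the vector w_n = (78n²−122n+52, 13, 78n²−70n+20, 78n²−96n+36) ∈ ℤ⁴ satisfies w_nᵀBw_n = 2 and (Bw_n)₄ = 0, and the same holds for the vector (78n²−86n+28, 13, 78n²−34n+8, 78n²−60n+18). -/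
open scoped Matrix

/-- In the rank 4 simply-laced hyperbolic system with edges `{1,2},{1,3},{1,4},{2,3},{3,4}`,
for every `n ∈ ℕ` the vectors `(78n²−122n+52, 13, 78n²−70n+20, 78n²−96n+36)` and
`(78n²−86n+28, 13, 78n²−34n+8, 78n²−60n+18)` have squared length `2` and are orthogonal
to `α₄`. -/
theorem infinite_family_c2_thirteen
    (B : Matrix (Fin 4) (Fin 4) ℤ)
    (hB : B = !![2, -1, -1, -1; -1, 2, -1, 0; -1, -1, 2, -1; -1, 0, -1, 2])
    (n : ℕ)
    (w w' : Fin 4 → ℤ)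
    (hw : w = ![78 * (n : ℤ) ^ 2 - 122 * n + 52, 13, 78 * (n : ℤ) ^ 2 - 70 * n + 20,
        78 * (n : ℤ) ^ 2 - 96 * n + 36])
    (hw' : w' = ![78 * (n : ℤ) ^ 2 - 86 * n + 28, 13, 78 * (n : ℤ) ^ 2 - 34 * n + 8,
        78 * (n : ℤ) ^ 2 - 60 * n + 18]) :
    w ⬝ᵥ B.mulVec w = 2 ∧ B.mulVec w 3 = 0 ∧
    w' ⬝ᵥ B.mulVec w' = 2 ∧ B.mulVec w' 3 = 0 := by
  subst hB hw hw'
  refine ⟨?_, ?_, ?_, ?_⟩ <;>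
    simp [Matrix.mulVec, dotProduct, Fin.sum_univ_four, Matrix.cons_val_zero,
      Matrix.cons_val_one, Matrix.head_cons, Matrix.cons_val_two, Matrix.tail_cons,
      Matrix.cons_val_three, Matrix.head_fin_const, Matrix.vecHead, Matrix.vecTail] <;> ring
end

section
/- Let Φ be a finite reduced crystallographic root system, α ∈ Φ, and set Z_s(α) = {β ∈ Φ : ⟨β, α∨⟩ = 0 and α + β ∉ Φ}. If β, γ ∈ Z_s(α) and β + γ ∈ Φ, then β + γ ∈ Z_s(α); that is, Z_s(α) is a closed subsystem of Φ. -/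
/-!
Let `δ = α + β + γ` be a root. Then `⟨δ, α∨⟩ = 2`, and since neither `δ - β = α + γ` nor
`δ - γ = α + β` is a root, `⟨β, δ∨⟩ ≤ 0` and `⟨γ, δ∨⟩ ≤ 0`; hence `⟨α, δ∨⟩ ≥ 2`. As the Coxeter
weight `⟨α, δ∨⟩⟨δ, α∨⟩` is at most `4`, both pairings equal `2`, which forces `δ = α`, i.e.
`β + γ = 0`, and `0` is not a root.
-/

open Set

namespace RootPairing

variable {ι R M N : Type*} [CommRing R]
  [AddCommGroup M] [Module R M] [AddCommGroup N] [Module R N]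
  (P : RootPairing ι R M N) {i j k l m : ι}

local notation "Φ" => range P.root
local notation "α" => P.root

/-- `α j ∈ Z_s(α i)`. -/
def IsStrictlyOrthogonal (i j : ι) : Prop :=
  P.pairing j i = 0 ∧ α i + α j ∉ Φ

variable {P}

lemma IsStrictlyOrthogonal.pairing_eq_two (hj : P.IsStrictlyOrthogonal i j)
    (hk : P.IsStrictlyOrthogonal i k) (hl : α l = α i + α j + α k) :
    P.pairing l i = 2 := by
  simp only [← root_coroot_eq_pairing, hl, map_add, LinearMap.add_apply]
  simp only [root_coroot_eq_pairing, pairing_same, hj.1, hk.1, add_zero]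

variable [CharZero R] [IsDomain R] [Finite ι] [P.IsCrystallographic]

lemma pairingIn_nonpos_of_sub_notMem (h : α i - α j ∉ Φ) (hij : i ≠ j) :
    P.pairingIn ℤ i j ≤ 0 := by
  contrapose! h
  exact P.root_sub_root_mem_of_pairingIn_pos h hij

lemma IsStrictlyOrthogonal.pairingIn_nonpos (hj : P.IsStrictlyOrthogonal i j)
    (hk : P.IsStrictlyOrthogonal i k) (hl : α l = α i + α j + α k) :
    P.pairingIn ℤ j l ≤ 0 := by
  refine P.pairingIn_nonpos_of_sub_notMem ?_ ?_
  · rw [← neg_mem_range_root_iff, neg_sub, hl, add_right_comm, add_sub_cancel_right]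
    exact hk.2
  · rintro rfl
    have h := hj.pairing_eq_two hk hl
    rw [hj.1] at h
    exact two_ne_zero h.symm

variable [Module.IsTorsionFree R M]

lemma eq_of_pairingIn_eq_two_of_two_le (h : P.pairingIn ℤ i j = 2)
    (h' : 2 ≤ P.pairingIn ℤ j i) : i = j := by
  have := P.coxeterWeightIn_le_four ℤ i j
  rw [coxeterWeightIn, h] at this
  exact (P.pairingIn_two_two_iff ℤ i j).mp ⟨h, by omega⟩

lemma IsStrictlyOrthogonal.of_root_eq_add (hj : P.IsStrictlyOrthogonal i j)
    (hk : P.IsStrictlyOrthogonal i k) (hm : α m = α j + α k) :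
    P.IsStrictlyOrthogonal i m := by
  refine ⟨by rw [pairing_eq_add_of_root_eq_add hm, hj.1, hk.1, add_zero], ?_⟩
  rintro ⟨l, hl⟩
  have hl' : α l = α i + α j + α k := by rw [hl, hm, add_assoc]
  have hli : P.pairingIn ℤ l i = 2 := FaithfulSMul.algebraMap_injective ℤ R <| by
    rw [P.algebraMap_pairingIn, hj.pairing_eq_two hk hl', map_ofNat]
  have hil : 2 ≤ P.pairingIn ℤ i l := by
    have hll := P.pairingIn_same ℤ l
    rw [pairingIn_eq_add_of_root_eq_add hl, pairingIn_eq_add_of_root_eq_add hm] at hll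
    linarith [hj.pairingIn_nonpos hk hl', hk.pairingIn_nonpos hj (by rw [hl', add_right_comm])]
  obtain rfl := eq_of_pairingIn_eq_two_of_two_le hli hil
  exact P.ne_zero m (left_eq_add.mp hl)

end RootPairing

theorem Zs_isClosed_general {ι M N : Type*} [Finite ι]
    [AddCommGroup M] [Module ℝ M] [AddCommGroup N] [Module ℝ N]
    (P : RootPairing ι ℝ M N)
    (hcr : P.IsCrystallographic) (i j k : ι)
    (hj : P.pairing j i = 0 ∧ P.root i + P.root j ∉ Set.range P.root)
    (hk : P.pairing k i = 0 ∧ P.root i + P.root k ∉ Set.range P.root)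
    (hsum : P.root j + P.root k ∈ Set.range P.root) :
    P.toLinearMap (P.root j + P.root k) (P.coroot i) = 0 ∧
      P.root i + (P.root j + P.root k) ∉ Set.range P.root := by
  obtain ⟨m, hm⟩ := hsum
  rw [← hm, P.root_coroot_eq_pairing]
  exact RootPairing.IsStrictlyOrthogonal.of_root_eq_add (P := P) hj hk hm

/-- `Z_s(α) = {β ∈ Φ : ⟨β, α∨⟩ = 0 and α + β ∉ Φ}` is closed: if `β, γ ∈ Z_s(α)` and
`β + γ` is a root, then `β + γ ∈ Z_s(α)`. Stated for a finite reduced crystallographic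
root system with `α = root i`, `β = root j`, `γ = root k`. -/
theorem Zs_isClosed {ι M N : Type*} [Finite ι]
    [AddCommGroup M] [Module ℝ M] [AddCommGroup N] [Module ℝ N]
    (P : RootPairing ι ℝ M N) [P.IsRootSystem]
    (hcr : P.IsCrystallographic) (hred : P.IsReduced) (i j k : ι)
    (hj : P.pairing j i = 0 ∧ P.root i + P.root j ∉ Set.range P.root)
    (hk : P.pairing k i = 0 ∧ P.root i + P.root k ∉ Set.range P.root)
    (hsum : P.root j + P.root k ∈ Set.range P.root) :
    P.toLinearMap (P.root j + P.root k) (P.coroot i) = 0 ∧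
      P.root i + (P.root j + P.root k) ∉ Set.range P.root :=
  Zs_isClosed_general P hcr i j k hj hk hsum
end
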